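/- arXiv:0807.4550 — 4 statements merged into one kernel-verified Lean document; each statement's English description precedes it below -/
import Mathlib

section
/- For every right-A-module endomorphism M ∈ C(G,H,A) one has ι(e_G)(δ) = δ and the function M(δ) takes all of its values in the right ideal A·e_H, i.e. M(δ) ∈ Fun_H(G, A·e_H); consequently the assignment ζ(M·ι(e_G)) := M(δ) is a well-defined map from the left ideal C(G,H,A)·ι(e_G) to Fun_H(G, A·e_H). -/
/-!
`δ` is fixed by every `ι(w)`, hence by their average `ι(e_G)`, and by right multiplication
by the idempotent `e_H`. Right `A`-linearity of `M` carries the latter to `M(δ) = M(δ)·e_H`,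
and `M(δ) = (M·ι(e_G))(δ)` depends only on `M·ι(e_G)`.
-/

open scoped BigOperators

section Setup
variable {G : Type} [Group G] [Fintype G] {H : Subgroup G} [Fintype H]
variable {A : Type} [Ring A] [Algebra ℂ A]

/-- `Fun_H(G,A)`: the `H`-equivariant `A`-valued functions on `G`,
as a right `A`-module (i.e. a module over `Aᵐᵒᵖ`). -/
def FunH (φ : H →* Aˣ) : Submodule Aᵐᵒᵖ (G → A) where
  carrier := {f | ∀ (h : H) (g : G), f (↑h * g) = (φ h : A) * f g}
  add_mem' := by
    intro f g hf hg h x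
    simp only [Pi.add_apply, hf h x, hg h x, mul_add]
  zero_mem' := by intro h x; simp
  smul_mem' := by
    intro a f hf h x
    simp only [Pi.smul_apply, MulOpposite.smul_eq_mul_unop, hf h x, mul_assoc]

variable (φ : H →* Aˣ)

/-- `ι(w)`, the endomorphism `f ↦ (g ↦ f (g * w))` of the right `A`-module `Fun_H(G,A)`. -/
def iota (w : G) : Module.End Aᵐᵒᵖ (FunH (G := G) φ) where
  toFun f := ⟨fun g => (f : G → A) (g * w), fun h x => by
    simpa only [mul_assoc] using f.2 h (x * w)⟩
  map_add' f₁ f₂ := rfl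
  map_smul' a f := rfl

/-- `ι(e_G)` where `e_G = |G|⁻¹ ∑_{g ∈ G} g` is the symmetrizing idempotent of `ℂG`. -/
noncomputable def iotaEG : Module.End Aᵐᵒᵖ (FunH (G := G) φ) :=
  (Fintype.card G : ℂ)⁻¹ • ∑ g : G, iota φ g

/-- The idempotent `e_H = |H|⁻¹ ∑_{h ∈ H} φ(h) ∈ A`. -/
noncomputable def eH : A := (Fintype.card H : ℂ)⁻¹ • ∑ h : H, (φ h : A)

lemma phi_mul_eH (h : H) : (φ h : A) * eH φ = eH φ := by
  unfold eH
  rw [mul_smul_comm, Finset.mul_sum]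
  congr 1
  exact Fintype.sum_equiv (Equiv.mulLeft h) _ _ (fun x => by
    simp [Equiv.mulLeft, ← Units.val_mul])

/-- The element `δ ∈ Fun_H(G,A)`, the constant function with value `e_H`. -/
noncomputable def delta : FunH (G := G) φ := ⟨fun _ => eH φ, fun h g => (phi_mul_eH φ h).symm⟩

/-- `η(f)`: the right `A`-module endomorphism `h ↦ (w ↦ f(w) ⬝ ∑_{g ∈ G} h(g))`. -/
def eta (f : FunH (G := G) φ) : Module.End Aᵐᵒᵖ (FunH (G := G) φ) where
  toFun h := ⟨fun w => (f : G → A) w * ∑ g : G, (h : G → A) g, fun hh x => by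
    simp only []
    rw [f.2 hh x, mul_assoc]⟩
  map_add' h₁ h₂ := by
    ext w
    simp [Finset.sum_add_distrib, mul_add]
  map_smul' a h := by
    ext w
    simp [MulOpposite.smul_eq_mul_unop, ← Finset.sum_mul, mul_assoc]

/-- Right multiplication by a central element `z`, as an endomorphism of `Fun_H(G,A)`. -/
def rmul (z : A) (hz : z ∈ Set.center A) : Module.End Aᵐᵒᵖ (FunH (G := G) φ) where
  toFun f := ⟨fun w => (f : G → A) w * z, fun h x => by simp only []; rw [f.2 h x, mul_assoc]⟩
  map_add' f₁ f₂ := by ext w; simp [add_mul]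
  map_smul' a f := by
    ext w
    simp only [Submodule.coe_smul, Pi.smul_apply, MulOpposite.smul_eq_mul_unop,
      mul_assoc]
    rw [hz.comm]; rfl
  
end Setup

section Statements
variable {G : Type} [Group G] [Fintype G] {H : Subgroup G} [Fintype H]
variable {A : Type} [Ring A] [Algebra ℂ A]

/-- The set of functions in `Fun_H(G,A)` all of whose values lie in the
right ideal `A·e_H`, i.e. `Fun_H(G, A·e_H)`. -/
def FunHeSet (φ : H →* Aˣ) : Set (FunH (G := G) φ) :=
  {f | ∀ g : G, ∃ a : A, (f : G → A) g = a * eH φ}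

lemma inv_card_smul_sum_const {ι 𝕜 M : Type*} [Fintype ι] [Nonempty ι] [DivisionSemiring 𝕜]
    [CharZero 𝕜] [AddCommMonoid M] [Module 𝕜 M] (x : M) :
    (Fintype.card ι : 𝕜)⁻¹ • ∑ _ : ι, x = x := by
  rw [Finset.sum_const, Finset.card_univ, ← Nat.cast_smul_eq_nsmul 𝕜, smul_smul,
    inv_mul_cancel₀ (Nat.cast_ne_zero.mpr Fintype.card_ne_zero), one_smul]

lemma eH_mul_eH (φ : H →* Aˣ) : eH φ * eH φ = eH φ := by
  calc eH φ * eH φ = (Fintype.card H : ℂ)⁻¹ • ∑ h : H, (φ h : A) * eH φ := by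
        rw [eH, smul_mul_assoc, Finset.sum_mul]
    _ = eH φ := by simp only [phi_mul_eH, inv_card_smul_sum_const]

lemma op_eH_smul_delta (φ : H →* Aˣ) : MulOpposite.op (eH φ) • delta (G := G) φ = delta φ :=
  Subtype.ext <| funext fun _ => eH_mul_eH φ

lemma iota_delta (φ : H →* Aˣ) (w : G) : iota φ w (delta φ) = delta φ := rfl

lemma iotaEG_delta (φ : H →* Aˣ) : iotaEG φ (delta (G := G) φ) = delta φ := by
  rw [iotaEG, LinearMap.smul_apply, LinearMap.sum_apply]
  simp only [iota_delta, inv_card_smul_sum_const]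

/-- `ι(e_G)(δ) = δ`; for every `M ∈ C(G,H,A)` the function `M(δ)`
takes all its values in `A·e_H`; and consequently `ζ(M·ι(e_G)) := M(δ)` is
well-defined on the left ideal `C(G,H,A)·ι(e_G)`. -/
theorem statement0 (φ : H →* Aˣ) :
    iotaEG φ (delta φ) = delta φ ∧
    (∀ M : Module.End Aᵐᵒᵖ (FunH (G := G) φ), M (delta φ) ∈ FunHeSet φ) ∧
    (∀ M M' : Module.End Aᵐᵒᵖ (FunH (G := G) φ),
      M * iotaEG φ = M' * iotaEG φ → M (delta φ) = M' (delta φ)) := by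
  refine ⟨iotaEG_delta φ, fun M => ?_, fun M M' hM => ?_⟩
  · have hMδ : MulOpposite.op (eH φ) • M (delta φ) = M (delta φ) := by
      rw [← map_smul, op_eH_smul_delta]
    exact fun g => ⟨_, congrFun (congrArg Subtype.val hMδ.symm) g⟩
  · rw [← iotaEG_delta φ]
    exact LinearMap.congr_fun hM (delta φ)

end Statements
end

section
/- Assume that the ℂ-linear extension ℂH → A of φ is injective. Then the ℂ-linear extension ι : ℂG → C(G,H,A) of the map w ↦ ι(w), where (ι(w)f)(g) = f(gw), is an injective homomorphism of ℂ-algebras. -/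
open scoped BigOperators

section Statements
variable {G : Type} [Group G] [Fintype G] {H : Subgroup G} [Fintype H]
variable {A : Type} [Ring A] [Algebra ℂ A]

/-- `ι` as a monoid homomorphism `G →* C(G,H,A)`. -/
def iotaMonoidHom (φ : H →* Aˣ) : G →* Module.End Aᵐᵒᵖ (FunH (G := G) φ) where
  toFun := iota φ
  map_one' := by
    refine LinearMap.ext fun f => Subtype.ext (funext fun g => ?_)
    simp [iota, Module.End.one_apply]
  map_mul' w w' := by
    refine LinearMap.ext fun f => Subtype.ext (funext fun g => ?_)
    simp [iota, Module.End.mul_apply, mul_assoc]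

/-- The `ℂ`-linear (algebra) extension `ι : ℂG → C(G,H,A)` of `w ↦ ι(w)`. -/
noncomputable def iotaHom (φ : H →* Aˣ) :
    MonoidAlgebra ℂ G →ₐ[ℂ] Module.End Aᵐᵒᵖ (FunH (G := G) φ) :=
  MonoidAlgebra.lift ℂ _ G (iotaMonoidHom φ)

end Statements

/-!
Let `x ∈ ℂG` with `ι(x) = 0`, and fix `g₀ ∈ G`. Apply `ι(x)` to the function of `Fun_H(G,A)`
supported on the coset `H g₀` that takes the value `φ(h)` at `h g₀`, and evaluate at `1`: the
result is the image of `∑_{h ∈ H} x(h g₀) h ∈ ℂH` in `A`. It vanishes, so by injectivity of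
`ℂH → A` all these coefficients vanish; the one at `h = 1` is `x(g₀)`.
-/

theorem MonoidAlgebra.lift_apply_eq_sum {R B M : Type*} [CommSemiring R] [Semiring B]
    [Algebra R B] [Monoid M] [Fintype M] (F : M →* B) (x : MonoidAlgebra R M) :
    MonoidAlgebra.lift R B M F x = ∑ m, x.coeff m • F m := by
  rw [MonoidAlgebra.lift_apply, Finsupp.sum_fintype _ _ fun _ => zero_smul R (F _)]

section ExtendByZero
variable {G : Type*} [Group G] {H : Subgroup G}

open Classical in
noncomputable def extendByZero {M₀ : Type*} [MonoidWithZero M₀] (φ : H →* M₀ˣ) (w : G) : M₀ :=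
  if hw : w ∈ H then (φ ⟨w, hw⟩ : M₀) else 0

section MonoidWithZero
variable {M₀ : Type*} [MonoidWithZero M₀] (φ : H →* M₀ˣ)

theorem extendByZero_coe (h : H) : extendByZero φ (h : G) = φ h := by
  simp [extendByZero]

theorem extendByZero_of_notMem {w : G} (hw : w ∉ H) : extendByZero φ w = 0 :=
  dif_neg hw

theorem extendByZero_mul (h : H) (w : G) :
    extendByZero φ (h * w) = φ h * extendByZero φ w := by
  by_cases hw : w ∈ H
  · rw [← Subgroup.coe_mk H w hw, ← Subgroup.coe_mul, extendByZero_coe, extendByZero_coe,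
      map_mul, Units.val_mul]
  · rw [extendByZero_of_notMem φ hw,
      extendByZero_of_notMem φ ((H.mul_mem_cancel_left h.2).not.2 hw), mul_zero]

end MonoidWithZero

theorem sum_smul_extendByZero {R A : Type*} [Semiring R] [Ring A] [Module R A]
    [Fintype G] [Fintype H] (φ : H →* Aˣ) (c : G → R) :
    ∑ w, c w • extendByZero φ w = ∑ h : H, c h • (φ h : A) := by
  rw [← Finset.sum_subset (Finset.subset_univ (.map (Function.Embedding.subtype (· ∈ H)) .univ))
    fun w _ hw => by simp_all [extendByZero_of_notMem], Finset.sum_map]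
  simp [extendByZero_coe]

end ExtendByZero

section CosetFun
variable {G : Type} [Group G] [Fintype G] {H : Subgroup G}
variable {A : Type} [Ring A] [Algebra ℂ A]

noncomputable def cosetFun (φ : H →* Aˣ) (g₀ : G) : FunH φ :=
  ⟨fun g => extendByZero φ (g * g₀⁻¹), fun h g => by
    simpa only [mul_assoc] using extendByZero_mul φ h (g * g₀⁻¹)⟩

theorem iotaHom_apply_apply (φ : H →* Aˣ) (x : MonoidAlgebra ℂ G) (f : FunH φ) (g : G) :
    (iotaHom φ x f : G → A) g = ∑ w, x.coeff w • (f : G → A) (g * w) := by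
  rw [iotaHom, MonoidAlgebra.lift_apply_eq_sum, LinearMap.sum_apply, Submodule.coe_sum,
    Finset.sum_apply]
  rfl

theorem iotaHom_cosetFun_one [Fintype H] (φ : H →* Aˣ) (x : MonoidAlgebra ℂ G) (g₀ : G) :
    (iotaHom φ x (cosetFun φ g₀) : G → A) 1 = ∑ h : H, x.coeff (h * g₀) • (φ h : A) := by
  rw [iotaHom_apply_apply, ← sum_smul_extendByZero φ fun w => x.coeff (w * g₀)]
  exact Fintype.sum_equiv (Equiv.mulRight g₀⁻¹) _ _ fun w => by simp [cosetFun]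

end CosetFun

section Statements
variable {G : Type} [Group G] [Fintype G] {H : Subgroup G} [Fintype H]
variable {A : Type} [Ring A] [Algebra ℂ A]

/-- If the `ℂ`-linear extension `ℂH → A` of `φ` is injective, then the
`ℂ`-linear extension `ι : ℂG → C(G,H,A)` of `w ↦ ι(w)` is an injective homomorphism of
`ℂ`-algebras. -/
theorem statement6 (φ : H →* Aˣ)
    (hφ : Function.Injective (MonoidAlgebra.lift ℂ A H ((Units.coeHom A).comp φ))) :
    Function.Injective (iotaHom (G := G) φ) := by
  refine (injective_iff_map_eq_zero _).2 fun x hx => MonoidAlgebra.ext (Finsupp.ext fun g₀ => ?_)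
  let y : MonoidAlgebra ℂ H :=
    .ofCoeff (Finsupp.equivFunOnFinite.symm fun h => x.coeff (h * g₀))
  have hy : MonoidAlgebra.lift ℂ A H ((Units.coeHom A).comp φ) y = 0 := by
    rw [MonoidAlgebra.lift_apply_eq_sum]
    simpa [y, hx] using (iotaHom_cosetFun_one φ x g₀).symm
  simpa [y] using congr(($(hφ (hy.trans (map_zero _).symm))).coeff 1)

end Statements
end

section
/- Let R be an associative unital ring, e ∈ R an idempotent, and S a subset of the centre Z(R) of R. Let I denote the two-sided ideal of R generated by S. Then I ∩ eRe is equal to the two-sided ideal of the (unital, with unit e) ring eRe generated by the set {s·e : s ∈ S}. -/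
/-!
The compression `r ↦ e * r * e` is additive, and for central `s` it sends `a * s * b` to the
product `(e * a * b * e) * (s * e)` in `eRe`. Since `span S` is the additive closure of `R * S * R`,
compression maps it into the ideal of `eRe` generated by the `s * e`, and it fixes every element
of `eRe`. Conversely the inclusion `eRe → R` is multiplicative and each `s * e` lies in `span S`,
so the preimage of `span S` is an ideal of `eRe` containing the generators.
-/

variable {R : Type} [Ring R]

/-- The corner `eRe = {e·r·e : r ∈ R}` of a ring `R` at an idempotent `e`,
realized as `{x : R // e * x * e = x}`. -/
def Corner (e : R) : Type _ := {x : R // e * x * e = x}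

namespace Corner

variable (e : R) [he : Fact (e * e = e)]

lemma e_mul_coe (x : Corner e) : e * x.1 = x.1 := by
  conv_lhs => rw [← x.2]
  rw [← mul_assoc, ← mul_assoc, he.out]
  exact x.2

lemma coe_mul_e (x : Corner e) : x.1 * e = x.1 := by
  conv_lhs => rw [← x.2]
  rw [mul_assoc, he.out]
  exact x.2

instance : Add (Corner e) :=
  ⟨fun x y => ⟨x.1 + y.1, by rw [mul_add, add_mul, x.2, y.2]⟩⟩

instance : Zero (Corner e) := ⟨⟨0, by simp⟩⟩

instance : Neg (Corner e) := ⟨fun x => ⟨-x.1, by simpa using x.2⟩⟩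

instance : Mul (Corner e) :=
  ⟨fun x y => ⟨x.1 * y.1, by
    rw [mul_assoc, mul_assoc, coe_mul_e e y, ← mul_assoc, e_mul_coe e x]⟩⟩

/-- The corner ring `eRe` is unital with unit element `e`. -/
instance : One (Corner e) := ⟨⟨e, by rw [he.out, he.out]⟩⟩

/-- The corner `eRe` of a ring at an idempotent `e` is a ring, with multiplication
inherited from `R` and unit element `e`. -/
instance instRing : Ring (Corner e) where
  nsmul n x := ⟨n • x.1, by rw [mul_smul_comm, smul_mul_assoc, x.2]⟩
  zsmul z x := ⟨z • x.1, by rw [mul_smul_comm, smul_mul_assoc, x.2]⟩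
  nsmul_zero x := Subtype.ext (zero_nsmul x.1)
  nsmul_succ n x := Subtype.ext (succ_nsmul x.1 n)
  zsmul_zero' x := Subtype.ext (zero_zsmul x.1)
  zsmul_succ' n x := Subtype.ext
    (show (Int.ofNat (n + 1)) • x.1 = Int.ofNat n • x.1 + x.1 by simp [add_zsmul]; noncomm_ring)
  zsmul_neg' n x := Subtype.ext
    (show (Int.negSucc n) • x.1 = -((n.succ : ℤ) • x.1) by simp [negSucc_zsmul]; noncomm_ring)
  add_assoc a b c := Subtype.ext (add_assoc a.1 b.1 c.1)
  zero_add a := Subtype.ext (zero_add a.1)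
  add_zero a := Subtype.ext (add_zero a.1)
  add_comm a b := Subtype.ext (add_comm a.1 b.1)
  neg_add_cancel a := Subtype.ext (neg_add_cancel a.1)
  mul_assoc a b c := Subtype.ext (mul_assoc a.1 b.1 c.1)
  one_mul a := Subtype.ext (e_mul_coe e a)
  mul_one a := Subtype.ext (coe_mul_e e a)
  left_distrib a b c := Subtype.ext (mul_add a.1 b.1 c.1)
  right_distrib a b c := Subtype.ext (add_mul a.1 b.1 c.1)
  zero_mul a := Subtype.ext (zero_mul a.1)
  mul_zero a := Subtype.ext (mul_zero a.1)

end Corner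

namespace Corner

variable (e : R) [he : Fact (e * e = e)]

def compress : R →+ Corner e where
  toFun r := ⟨e * r * e, by simp only [← mul_assoc, he.out]; simp only [mul_assoc, he.out]⟩
  map_zero' := Subtype.ext (by simp only [mul_zero, zero_mul]; rfl)
  map_add' a b := Subtype.ext (show e * (a + b) * e = e * a * e + e * b * e by noncomm_ring)

lemma compress_coe (x : Corner e) : compress e x.1 = x := Subtype.ext x.2

def subtype : Corner e →ₙ+* R where
  toFun := Subtype.val
  map_zero' := rfl
  map_add' _ _ := rfl
  map_mul' _ _ := rfl

def ofCenter {s : R} (hs : s ∈ Set.center R) : Corner e :=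
  ⟨s * e, calc e * (s * e) * e = e * s * (e * e) := by noncomm_ring
    _ = s * e := by rw [← (Set.mem_center_iff.mp hs).comm e, he.out, mul_assoc, he.out]⟩

lemma compress_mul_mul_of_mem_center (a b : R) {s : R} (hs : s ∈ Set.center R) :
    compress e (a * s * b) = compress e (a * b) * ofCenter e hs := by
  have hcomm : ∀ t : R, s * t = t * s := (Set.mem_center_iff.mp hs).comm
  apply Subtype.ext
  show e * (a * s * b) * e = e * (a * b) * e * (s * e)
  have hse : s * e * e = e * s * e := by rw [hcomm e]
  calc e * (a * s * b) * e = e * (a * b) * (s * e * e) := by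
        rw [mul_assoc a s b, hcomm b, mul_assoc s, he.out]; noncomm_ring
    _ = e * (a * b) * e * (s * e) := by rw [hse]; noncomm_ring

open scoped Pointwise in
lemma compress_mem_span_of_mem_span {S : Set R} (hS : S ⊆ Set.center R) {r : R}
    (hr : r ∈ TwoSidedIdeal.span S) :
    compress e r ∈ TwoSidedIdeal.span {y : Corner e | ∃ s ∈ S, y.1 = s * e} := by
  set J := TwoSidedIdeal.span {y : Corner e | ∃ s ∈ S, y.1 = s * e}
  have hgen : Set.univ * S * Set.univ ⊆
      ((AddSubgroup.ofClass J).comap (compress e) : Set R) := by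
    rintro _ ⟨_, ⟨a, -, s, hs, rfl⟩, b, -, rfl⟩
    change compress e (a * s * b) ∈ J
    rw [compress_mul_mul_of_mem_center e a b (hS hs)]
    exact J.mul_mem_left _ _ (TwoSidedIdeal.subset_span ⟨s, hs, rfl⟩)
  rw [TwoSidedIdeal.mem_span_iff_mem_addSubgroup_closure] at hr
  exact (AddSubgroup.closure_le _).mpr hgen hr

lemma span_le_comap_subtype_span (S : Set R) :
    TwoSidedIdeal.span {y : Corner e | ∃ s ∈ S, y.1 = s * e} ≤
      (TwoSidedIdeal.span S).comap (subtype e) := by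
  rw [TwoSidedIdeal.span_le]
  rintro y ⟨s, hs, hy⟩
  rw [SetLike.mem_coe, TwoSidedIdeal.mem_comap]
  change y.1 ∈ TwoSidedIdeal.span S
  rw [hy]
  exact TwoSidedIdeal.mul_mem_right _ _ _ (TwoSidedIdeal.subset_span hs)

end Corner

/-- Let `R` be a ring, `e ∈ R` an idempotent and `S` a subset of the
centre of `R`. Let `I` be the two-sided ideal of `R` generated by `S`. Then `I ∩ eRe`
equals the two-sided ideal of the corner ring `eRe` generated by `{s·e : s ∈ S}`. -/
theorem statement7 (e : R) (he : e * e = e) (S : Set R) (hS : S ⊆ Set.center R) :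
    haveI : Fact (e * e = e) := ⟨he⟩
    ∀ x : Corner e,
      x.1 ∈ TwoSidedIdeal.span S ↔
        x ∈ TwoSidedIdeal.span {y : Corner e | ∃ s ∈ S, y.1 = s * e} := by
  have : Fact (e * e = e) := ⟨he⟩
  intro x
  refine ⟨fun hx => ?_, fun hx => ?_⟩
  · simpa only [Corner.compress_coe] using Corner.compress_mem_span_of_mem_span e hS hx
  · exact (TwoSidedIdeal.mem_comap _).mp (Corner.span_le_comap_subtype_span e S hx)
end

section
/- As polynomials in x one has the identity det( (∂Q_i/∂y_k)(P_1(x),…,P_n(x)) )_{i,k} = (k/k′)·∏_{H∈𝒜, b∉H} L_H(x+b)^{e_H−1}; that is, the determinant of the matrix of partial derivatives of the Q_i, evaluated at (P_1(x),…,P_n(x)), equals (k/k′) times the product over the reflecting hyperplanes H not containing b of L_H(x+b)^{e_H−1}. -/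
open Matrix MvPolynomial

/-- The action of an invertible matrix `w` on polynomials: `(w · f)(x) = f(w⁻¹x)`,
i.e. substitute `X i ↦ ∑ j (w⁻¹)_{ij} X j` in `f`. -/
noncomputable def glAct {n : ℕ} (w : GL (Fin n) ℂ) (f : MvPolynomial (Fin n) ℂ) :
    MvPolynomial (Fin n) ℂ :=
  aeval (fun i => ∑ j, C (((w⁻¹ : GL (Fin n) ℂ) : Matrix (Fin n) (Fin n) ℂ) i j) * X j) f

/-- Substituting `x_i + b_i` for `x_i`: `f ↦ f^{(b)}`, `f^{(b)}(x) = f(x + b)`. -/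
noncomputable def shift {n : ℕ} (b : Fin n → ℂ) (f : MvPolynomial (Fin n) ℂ) :
    MvPolynomial (Fin n) ℂ :=
  aeval (fun i => X i + C (b i)) f

/-- The linear form `v ↦ ∑ j c_j v_j` with coefficient vector `c`. -/
noncomputable def linForm {n : ℕ} (c : Fin n → ℂ) : (Fin n → ℂ) →ₗ[ℂ] ℂ where
  toFun v := ∑ j, c j * v j
  map_add' u v := by simp [mul_add, Finset.sum_add_distrib]
  map_smul' r v := by
    simp only [Pi.smul_apply, smul_eq_mul, RingHom.id_apply, Finset.mul_sum]
    exact Finset.sum_congr rfl fun j _ => by ring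

/-- The linear form with coefficient vector `c`, as a degree-one polynomial. -/
noncomputable def linPoly {n : ℕ} (c : Fin n → ℂ) : MvPolynomial (Fin n) ℂ :=
  ∑ j, C (c j) * X j

/-- The subspace of vectors fixed by `w`. -/
noncomputable def fixedSpace {n : ℕ} (w : GL (Fin n) ℂ) : Submodule ℂ (Fin n → ℂ) :=
  LinearMap.ker (Matrix.mulVecLin ((w : Matrix (Fin n) (Fin n) ℂ) - 1))

/-- `V` is a reflecting hyperplane of `W`: the fixed-point space of a pseudo-reflection
of `W` (an element whose fixed-point space is a hyperplane). -/
def IsReflectingHyperplane {n : ℕ} (W : Subgroup (GL (Fin n) ℂ))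
    (V : Submodule ℂ (Fin n → ℂ)) : Prop :=
  ∃ w ∈ W, fixedSpace w = V ∧ Module.finrank ℂ V = n - 1

/-- The subalgebra of polynomials invariant under the stabilizer
`W_b = {w ∈ W : w·b = b}`. -/
noncomputable def invariants {n : ℕ} (W : Subgroup (GL (Fin n) ℂ)) (b : Fin n → ℂ) :
    Subalgebra ℂ (MvPolynomial (Fin n) ℂ) where
  carrier := {f | ∀ w ∈ W, (w : Matrix (Fin n) (Fin n) ℂ) *ᵥ b = b → glAct w f = f}
  mul_mem' := by
    intro f g hf hg w hw hb
    have hf' := hf w hw hb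
    have hg' := hg w hw hb
    simp only [glAct] at hf' hg' ⊢
    rw [_root_.map_mul, hf', hg']
  add_mem' := by
    intro f g hf hg w hw hb
    have hf' := hf w hw hb
    have hg' := hg w hw hb
    simp only [glAct] at hf' hg' ⊢
    rw [_root_.map_add, hf', hg']
  algebraMap_mem' := by
    intro c w hw hb
    simp [glAct]


lemma chainRule {n : ℕ} (P : Fin n → MvPolynomial (Fin n) ℂ) (q : MvPolynomial (Fin n) ℂ)
    (j : Fin n) :
    pderiv j (aeval P q) = ∑ k, aeval P (pderiv k q) * pderiv j (P k) := by
  induction q using MvPolynomial.induction_on with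
  | C a => simp
  | add p q hp hq =>
    simp only [map_add, hp, hq, add_mul, Finset.sum_add_distrib]
  | mul_X p s hp =>
    have key : ∀ k, aeval P (pderiv k (p * X s)) * pderiv j (P k)
        = aeval P (pderiv k p) * pderiv j (P k) * P s
          + (if k = s then aeval P p * pderiv j (P k) else 0) := by
      intro k
      by_cases h : k = s
      · subst h
        simp only [Derivation.leibniz, smul_eq_mul, map_add, _root_.map_mul, pderiv_X_self,
          _root_.map_one, aeval_X, if_true]
        ring
      · simp only [Derivation.leibniz, smul_eq_mul, map_add, _root_.map_mul,
          pderiv_X_of_ne (Ne.symm h), map_zero, aeval_X, if_neg h]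
        ring
    rw [_root_.map_mul, aeval_X, Derivation.leibniz, smul_eq_mul, smul_eq_mul, hp]
    rw [Finset.sum_congr rfl fun k _ => key k, Finset.sum_add_distrib,
      Finset.sum_ite_eq' Finset.univ s, ← Finset.sum_mul]
    simp only [Finset.mem_univ, if_true]
    ring

lemma shift_pderiv {n : ℕ} (b : Fin n → ℂ) (f : MvPolynomial (Fin n) ℂ) (j : Fin n) :
    pderiv j (shift b f) = shift b (pderiv j f) := by
  rw [shift, chainRule]
  rw [Finset.sum_eq_single j]
  · simp [shift]
  · intro k _ hk
    simp [Pi.single_eq_of_ne hk]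
  · simp

lemma linPoly_shift {n : ℕ} (b c : Fin n → ℂ) :
    shift b (linPoly c) = linPoly c + C (linForm c b) := by
  have h : linForm c b = ∑ j, c j * b j := rfl
  simp only [shift, linPoly, map_sum, _root_.map_mul, aeval_C, aeval_X, mul_add,
    Finset.sum_add_distrib]
  congr 1
  rw [h, map_sum C]
  exact Finset.sum_congr rfl fun j _ => by rw [C_mul]; rfl

lemma linPoly_ne_zero {n : ℕ} {c : Fin n → ℂ} (hc : c ≠ 0) : linPoly c ≠ 0 := by
  obtain ⟨j, hj⟩ := Function.ne_iff.mp hc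
  intro hz
  apply hj
  have := congrArg (eval (Pi.single j 1)) hz
  simpa [linPoly, Pi.single_apply, mul_ite, Finset.sum_ite_eq'] using this

open Classical in
/-- As polynomials in `x`, the determinant of the matrix of partial
derivatives of the `Q_i`, evaluated at `(P_1(x),…,P_n(x))`, equals `(k/k′)` times the
product over the reflecting hyperplanes `H` not containing `b` of `L_H(x+b)^{e_H−1}`. -/
theorem statement10
    {n : ℕ} (hn : 1 ≤ n)
    (W : Subgroup (GL (Fin n) ℂ)) [Finite W] (b : Fin n → ℂ)
    {ι : Type} [Fintype ι] (L : ι → (Fin n → ℂ)) (e : ι → ℕ)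
    (hL0 : ∀ i, L i ≠ 0)
    (hLinj : Function.Injective fun i => LinearMap.ker (linForm (L i)))
    (hLrefl : ∀ i, IsReflectingHyperplane W (LinearMap.ker (linForm (L i))))
    (hLall : ∀ V, IsReflectingHyperplane W V → ∃ i, LinearMap.ker (linForm (L i)) = V)
    (he : ∀ i, e i = Nat.card {w : W | ∀ v ∈ LinearMap.ker (linForm (L i)),
      ((w : GL (Fin n) ℂ) : Matrix (Fin n) (Fin n) ℂ) *ᵥ v = v})
    (F : Fin n → MvPolynomial (Fin n) ℂ) (hFalg : AlgebraicIndependent ℂ F)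
    (hFinv : ∀ j, ∀ w ∈ W, glAct w (F j) = F j)
    (k : ℂ) (hk : k ≠ 0)
    (hFjac : (Matrix.of fun i j => pderiv j (F i)).det
      = C k * ∏ i : ι, linPoly (L i) ^ (e i - 1))
    (P : Fin n → MvPolynomial (Fin n) ℂ) (hPalg : AlgebraicIndependent ℂ P)
    (hPinv : ∀ j, P j ∈ invariants W b)
    (hP0 : ∀ j, eval (0 : Fin n → ℂ) (P j) = 0)
    (hPgen : Algebra.adjoin ℂ (Set.range P) = invariants W b)
    (k' : ℂ) (hk' : k' ≠ 0)
    (hPjac : (Matrix.of fun i j => pderiv j (P i)).det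
      = C k' * ∏ i ∈ Finset.univ.filter (fun i => linForm (L i) b = 0),
          linPoly (L i) ^ (e i - 1))
    (Q : Fin n → MvPolynomial (Fin n) ℂ)
    (hQ : ∀ i, shift b (F i) - C (eval b (F i)) = aeval P (Q i)) :
    (Matrix.of fun i j => aeval P (pderiv j (Q i))).det
      = C (k * k'⁻¹) * ∏ i ∈ Finset.univ.filter (fun i => linForm (L i) b ≠ 0),
          shift b (linPoly (L i)) ^ (e i - 1) := by
  classical
  set sh : MvPolynomial (Fin n) ℂ →+* MvPolynomial (Fin n) ℂ :=
    (aeval (fun i => X i + C (b i)) : MvPolynomial (Fin n) ℂ →ₐ[ℂ] MvPolynomial (Fin n) ℂ).toRingHom with hsh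
  have hshf : ∀ f, sh f = shift b f := fun f => rfl
  set M : Matrix (Fin n) (Fin n) (MvPolynomial (Fin n) ℂ) :=
    Matrix.of fun i k => aeval P (pderiv k (Q i)) with hM
  set N : Matrix (Fin n) (Fin n) (MvPolynomial (Fin n) ℂ) :=
    Matrix.of fun k j => pderiv j (P k) with hN
  set A : Matrix (Fin n) (Fin n) (MvPolynomial (Fin n) ℂ) :=
    Matrix.of fun i j => pderiv j (F i) with hA
  -- the shifted F-Jacobian matrix equals M * N
  have hmat : A.map sh = M * N := by
    refine Matrix.ext fun i j => ?_
    rw [Matrix.map_apply, Matrix.mul_apply]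
    have h1 : shift b (F i) = aeval P (Q i) + C (eval b (F i)) := by
      have := hQ i
      linear_combination this
    calc sh (A i j) = pderiv j (shift b (F i)) := by
          rw [hshf, hA, Matrix.of_apply, shift_pderiv]
      _ = pderiv j (aeval P (Q i)) := by rw [h1, map_add, pderiv_C, add_zero]
      _ = ∑ k, aeval P (pderiv k (Q i)) * pderiv j (P k) := chainRule P (Q i) j
      _ = ∑ k, M i k * N k j := rfl
  have hdet : M.det * N.det = sh A.det := by
    rw [RingHom.map_det, RingHom.mapMatrix_apply, hmat, Matrix.det_mul]
  -- compute sh A.det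
  set p : ι → Prop := fun i => linForm (L i) b = 0 with hp
  set B : MvPolynomial (Fin n) ℂ :=
    ∏ i ∈ Finset.univ.filter (fun i => ¬ p i), shift b (linPoly (L i)) ^ (e i - 1) with hB
  set Apoly : MvPolynomial (Fin n) ℂ :=
    ∏ i ∈ Finset.univ.filter p, linPoly (L i) ^ (e i - 1) with hApoly
  have hshA : sh A.det = C k * (Apoly * B) := by
    rw [hFjac, _root_.map_mul, map_prod]
    have hC : sh (C k) = C k := by simp [hsh]
    rw [hC]
    congr 1
    rw [← Finset.prod_filter_mul_prod_filter_not Finset.univ p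
      (fun i => sh (linPoly (L i) ^ (e i - 1)))]
    congr 1
    · refine Finset.prod_congr rfl fun i hi => ?_
      have hpi : linForm (L i) b = 0 := (Finset.mem_filter.mp hi).2
      rw [map_pow, hshf, linPoly_shift, hpi, map_zero, add_zero]
    · refine Finset.prod_congr rfl fun i hi => ?_
      rw [map_pow, hshf]
  have hdet' : M.det * (C k' * Apoly) = C k * (Apoly * B) := by
    rw [← hshA, ← hdet, hPjac]
  have hApoly_ne : Apoly ≠ 0 := by
    rw [hApoly]
    refine Finset.prod_ne_zero_iff.mpr fun i _ => ?_
    exact pow_ne_zero _ (linPoly_ne_zero (hL0 i))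
  have hcancel : M.det * C k' = C k * B := by
    have h2 : (M.det * C k') * Apoly = (C k * B) * Apoly := by
      linear_combination hdet'
    exact mul_right_cancel₀ hApoly_ne h2
  have hCk' : (C k' : MvPolynomial (Fin n) ℂ) * C k'⁻¹ = 1 := by
    rw [← C_mul, mul_inv_cancel₀ hk', C_1]
  calc M.det = M.det * (C k' * C k'⁻¹) := by rw [hCk', mul_one]
    _ = (M.det * C k') * C k'⁻¹ := by ring
    _ = (C k * B) * C k'⁻¹ := by rw [hcancel]
    _ = C (k * k'⁻¹) * B := by rw [C_mul]; ring
end
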